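/- The set Ω := {(τ,z) ∈ Mat_{g×g}(ℂ) × ℂ^g : Im τ + (Im τ)ᵀ is a positive definite real matrix} is open in Mat_{g×g}(ℂ) × ℂ^g, and the function F(τ,z) := ∑_{n∈ℤ^g} exp(πi(nᵀτn + 2nᵀz)) is holomorphic (complex differentiable) on Ω. Since Ω contains H_g × ℂ^g, the Riemann theta function θ is a holomorphic function of (τ,z) ∈ H_g × ℂ^g. -/

import Mathlib

open scoped Matrix
open Matrix

attribute [local instance] Matrix.normedAddCommGroup Matrix.normedSpace

/-- The theta series as a function of the pair `(τ, z)`. -/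
noncomputable def thetaFun (g : ℕ) (p : Matrix (Fin g) (Fin g) ℂ × (Fin g → ℂ)) : ℂ :=
  ∑' n : Fin g → ℤ,
    Complex.exp ((Real.pi : ℂ) * Complex.I *
      ((fun i => (n i : ℂ)) ⬝ᵥ p.1.mulVec (fun i => (n i : ℂ)) +
        2 * ((fun i => (n i : ℂ)) ⬝ᵥ p.2)))

/-- The open domain `Ω`: pairs `(τ, z)` such that `Im τ + (Im τ)ᵀ` is positive definite. -/
def thetaDomain (g : ℕ) : Set (Matrix (Fin g) (Fin g) ℂ × (Fin g → ℂ)) :=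
  {p | (Matrix.of fun i j => (p.1 i j).im + (p.1 j i).im).PosDef}

/-!
Near a point of `Ω` the positive definiteness of `Y = Im τ + (Im τ)ᵀ` is uniform:
`nᵀ Y n ≥ c |n|²` with one `c > 0` for all nearby `τ`. Hence the real part of the exponent
`πi (nᵀτn + 2nᵀz)` of the `n`-th term is at most `∑ᵢ (-a nᵢ² + b |nᵢ|)` near that point, while
the exponent, a linear form in `(τ, z)`, has norm `O((1 + ∑ᵢ |nᵢ|)²)`. So the terms and their
derivatives are dominated by a product of one-dimensional Gaussian sums, and the series can be
differentiated term by term.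
-/

open Filter Topology

lemma summable_prod_fin_of_nonneg {α : Type*} {f : α → ℝ} (hf₀ : 0 ≤ f) (hf : Summable f) :
    ∀ g : ℕ, Summable fun n : Fin g → α => ∏ i, f (n i)
  | 0 => .of_finite
  | g + 1 => by
    rw [← (Fin.consEquiv fun _ => α).summable_iff]
    simpa [Function.comp_def, Fin.prod_univ_succ] using
      hf.mul_of_nonneg (summable_prod_fin_of_nonneg hf₀ hf g) hf₀
        fun n => Finset.prod_nonneg fun i _ => hf₀ (n i)

lemma summable_exp_neg_mul_sq_add_mul_abs {a : ℝ} (ha : 0 < a) (b : ℝ) :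
    Summable fun k : ℤ => Real.exp (-a * (k : ℝ) ^ 2 + b * |(k : ℝ)|) := by
  refine (summable_pow_mul_jacobiTheta₂_term_bound (b / (2 * Real.pi))
    (div_pos ha Real.pi_pos) 0).congr fun k => ?_
  rw [pow_zero, one_mul, Int.cast_abs]
  congr 1
  field_simp
  ring

lemma summable_exp_sum_neg_mul_sq_add_mul_abs {a : ℝ} (ha : 0 < a) (b : ℝ) (g : ℕ) :
    Summable fun n : Fin g → ℤ => Real.exp (∑ i, (-a * (n i : ℝ) ^ 2 + b * |(n i : ℝ)|)) := by
  simpa only [Real.exp_sum] using summable_prod_fin_of_nonneg (fun _ => (Real.exp_pos _).le)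
    (summable_exp_neg_mul_sq_add_mul_abs ha b) g

namespace Matrix

variable {ι : Type*} [Fintype ι]

section Norms

variable {R : Type*} [NormedRing R]

lemma norm_dotProduct_le_sum_mul (x y : ι → R) : ‖x ⬝ᵥ y‖ ≤ (∑ i, ‖x i‖) * ‖y‖ :=
  calc ‖x ⬝ᵥ y‖ ≤ ∑ i, ‖x i‖ * ‖y i‖ :=
        (norm_sum_le _ _).trans (Finset.sum_le_sum fun i _ => norm_mul_le _ _)
    _ ≤ ∑ i, ‖x i‖ * ‖y‖ := by gcongr; exact norm_le_pi_norm y _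
    _ = (∑ i, ‖x i‖) * ‖y‖ := (Finset.sum_mul ..).symm

lemma norm_dotProduct_le_mul_sum (x y : ι → R) : ‖x ⬝ᵥ y‖ ≤ ‖x‖ * ∑ i, ‖y i‖ :=
  calc ‖x ⬝ᵥ y‖ ≤ ∑ i, ‖x i‖ * ‖y i‖ :=
        (norm_sum_le _ _).trans (Finset.sum_le_sum fun i _ => norm_mul_le _ _)
    _ ≤ ∑ i, ‖x‖ * ‖y i‖ := by gcongr; exact norm_le_pi_norm x _
    _ = ‖x‖ * ∑ i, ‖y i‖ := (Finset.mul_sum ..).symm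

lemma norm_mulVec_le_mul_sum (M : Matrix ι ι R) (x : ι → R) : ‖M *ᵥ x‖ ≤ ‖M‖ * ∑ i, ‖x i‖ :=
  (pi_norm_le_iff_of_nonneg (by positivity)).2 fun i =>
    (norm_dotProduct_le_mul_sum _ _).trans (by gcongr; exact norm_le_pi_norm M i)

lemma norm_dotProduct_mulVec_le (M : Matrix ι ι R) (x : ι → R) :
    ‖x ⬝ᵥ M *ᵥ x‖ ≤ ‖M‖ * (∑ i, ‖x i‖) ^ 2 :=
  calc ‖x ⬝ᵥ M *ᵥ x‖ ≤ (∑ i, ‖x i‖) * (‖M‖ * ∑ i, ‖x i‖) :=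
        (norm_dotProduct_le_sum_mul _ _).trans (by gcongr; exact norm_mulVec_le_mul_sum M x)
    _ = ‖M‖ * (∑ i, ‖x i‖) ^ 2 := by ring

end Norms

lemma dotProduct_add_transpose_mulVec {R : Type*} [CommRing R] (A : Matrix ι ι R) (x : ι → R) :
    x ⬝ᵥ (A + Aᵀ) *ᵥ x = 2 * (x ⬝ᵥ A *ᵥ x) := by
  rw [add_mulVec, dotProduct_add, dotProduct_mulVec x Aᵀ, vecMul_transpose, dotProduct_comm]
  ring

lemma im_dotProduct_mulVec_ofReal (τ : Matrix ι ι ℂ) (x : ι → ℝ) :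
    ((fun i => (x i : ℂ)) ⬝ᵥ τ *ᵥ (fun i => (x i : ℂ))).im = x ⬝ᵥ τ.map Complex.im *ᵥ x := by
  simp [dotProduct, mulVec, Complex.im_sum, Finset.mul_sum]

lemma dotProduct_self_pos {x : ι → ℝ} (hx : x ≠ 0) : 0 < x ⬝ᵥ x :=
  (Finset.sum_nonneg fun i _ => mul_self_nonneg (x i)).lt_of_ne
    (Ne.symm (dotProduct_self_eq_zero.not.2 hx))

lemma IsHermitian.posDef_of_mul_dotProduct_self_le {S : Matrix ι ι ℝ} (hS : S.IsHermitian)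
    {c : ℝ} (hc : 0 < c) (h : ∀ x, c * (x ⬝ᵥ x) ≤ x ⬝ᵥ S *ᵥ x) : S.PosDef :=
  .of_dotProduct_mulVec_pos hS fun x hx => by
    rw [star_trivial]
    exact (mul_pos hc (dotProduct_self_pos hx)).trans_le (h x)

lemma PosDef.eventually_mul_dotProduct_self_le {S₀ : Matrix ι ι ℝ} (hS₀ : S₀.PosDef) :
    ∃ c > 0, ∀ᶠ S in 𝓝 S₀, ∀ x : ι → ℝ, c * (x ⬝ᵥ x) ≤ x ⬝ᵥ S *ᵥ x := by
  -- `c` is half the minimum of the Rayleigh quotient of `S₀` on the unit sphere `K`; the tube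
  -- lemma carries the strict bound on `K` over to all `S` near `S₀`, homogeneity to all `x`.
  set K := Metric.sphere (0 : ι → ℝ) 1
  have hK : IsCompact K := isCompact_sphere 0 1
  have hK₀ : ∀ x ∈ K, x ≠ 0 := fun x hx h => by simp [K, h] at hx
  obtain ⟨c, hc, hcK⟩ : ∃ c > 0, ∀ x ∈ K, c * (x ⬝ᵥ x) < x ⬝ᵥ S₀ *ᵥ x := by
    rcases K.eq_empty_or_nonempty with hKe | hKne
    · exact ⟨1, one_pos, by simp [hKe]⟩
    set q := fun x : ι → ℝ => (x ⬝ᵥ S₀ *ᵥ x) / (x ⬝ᵥ x)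
    have hq_cont : ContinuousOn q K :=
      ContinuousOn.div (by fun_prop) (by fun_prop) fun x hx => (dotProduct_self_pos (hK₀ x hx)).ne'
    obtain ⟨u, hu, hmin⟩ := hK.exists_isMinOn hKne hq_cont
    have hqu : 0 < q u := by
      simpa [star_trivial] using div_pos (hS₀.dotProduct_mulVec_pos (hK₀ u hu))
        (dotProduct_self_pos (hK₀ u hu))
    refine ⟨q u / 2, half_pos hqu, fun x hx => ?_⟩
    have hx₀ := dotProduct_self_pos (hK₀ x hx)
    calc q u / 2 * (x ⬝ᵥ x) < q u * (x ⬝ᵥ x) := by gcongr; exact half_lt_self hqu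
      _ ≤ q x * (x ⬝ᵥ x) := by gcongr; exact hmin hx
      _ = x ⬝ᵥ S₀ *ᵥ x := div_mul_cancel₀ _ hx₀.ne'
  have hev : ∀ᶠ S in 𝓝 S₀, ∀ x ∈ K, c * (x ⬝ᵥ x) < x ⬝ᵥ S *ᵥ x :=
    hK.eventually_forall_of_forall_eventually fun x hx =>
      (isOpen_lt (by fun_prop) (by fun_prop)).mem_nhds (hcK x hx)
  refine ⟨c, hc, hev.mono fun S hS x => ?_⟩
  rcases eq_or_ne x 0 with rfl | hx
  · simp
  have ht : 0 < ‖x‖⁻¹ ^ 2 := by positivity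
  have hscaled := hS (‖x‖⁻¹ • x) (by simp [K, norm_smul, norm_ne_zero_iff.2 hx])
  simp only [smul_dotProduct, dotProduct_smul, mulVec_smul, smul_eq_mul] at hscaled
  nlinarith

end Matrix

lemma differentiableAt_tsum_of_eventually_norm_le {α E F : Type*} [NormedAddCommGroup E]
    [NormedSpace ℂ E] [NormedAddCommGroup F] [NormedSpace ℂ F] [CompleteSpace F]
    {f : α → E → F} {f' : α → E → E →L[ℂ] F} {u : α → ℝ} {x₀ : E} (hu : Summable u)
    (hf : ∀ n x, HasFDerivAt (f n) (f' n x) x)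
    (hbound : ∀ᶠ x in 𝓝 x₀, ∀ n, ‖f n x‖ ≤ u n ∧ ‖f' n x‖ ≤ u n) :
    DifferentiableAt ℂ (fun x => ∑' n, f n x) x₀ := by
  obtain ⟨r, hr, hball⟩ := Metric.eventually_nhds_iff_ball.1 hbound
  have hx₀ : x₀ ∈ Metric.ball x₀ r := Metric.mem_ball_self hr
  exact (hasFDerivAt_tsum_of_isPreconnected hu Metric.isOpen_ball
    (convex_ball x₀ r).isPreconnected (fun n x _ => hf n x) (fun n x hx => (hball x hx n).2) hx₀
    (hu.of_norm_bounded fun n => (hball x₀ hx₀ n).1) hx₀).differentiableAt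

lemma exp_mul_one_add_sq_le {x w : ℝ} (hw : 0 ≤ w) :
    Real.exp x * (1 + w) ^ 2 ≤ Real.exp (x + 2 * w) := by
  rw [Real.exp_add, two_mul, Real.exp_add, ← sq]
  gcongr
  linarith [Real.add_one_le_exp w]

def imSymm {ι : Type*} (τ : Matrix ι ι ℂ) : Matrix ι ι ℝ :=
  τ.map Complex.im + (τ.map Complex.im)ᵀ

section imSymm

variable {ι : Type*}

lemma isHermitian_imSymm (τ : Matrix ι ι ℂ) : (imSymm τ).IsHermitian := by
  simp [IsHermitian, imSymm, add_comm]

lemma continuous_imSymm : Continuous (imSymm : Matrix ι ι ℂ → Matrix ι ι ℝ) := by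
  unfold imSymm
  fun_prop

variable [Fintype ι]

lemma isOpen_setOf_posDef_imSymm : IsOpen {τ : Matrix ι ι ℂ | (imSymm τ).PosDef} := by
  refine isOpen_iff_mem_nhds.2 fun τ₀ hτ₀ => ?_
  obtain ⟨c, hc, hS⟩ := PosDef.eventually_mul_dotProduct_self_le hτ₀
  filter_upwards [continuous_imSymm.continuousAt hS] with τ hτ
  exact (isHermitian_imSymm τ).posDef_of_mul_dotProduct_self_le hc hτ

end imSymm

lemma mem_thetaDomain {g : ℕ} {p : Matrix (Fin g) (Fin g) ℂ × (Fin g → ℂ)} :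
    p ∈ thetaDomain g ↔ (imSymm p.1).PosDef := Iff.rfl

-- A linear map rather than a continuous one: `mkContinuous` below then yields a continuous
-- linear map for the norm topology on matrices, which is the one carrying an operator norm.
noncomputable def thetaExponent (g : ℕ) (n : Fin g → ℤ) :
    Matrix (Fin g) (Fin g) ℂ × (Fin g → ℂ) →ₗ[ℂ] ℂ where
  toFun p := (Real.pi : ℂ) * Complex.I *
    ((fun i => (n i : ℂ)) ⬝ᵥ p.1 *ᵥ (fun i => (n i : ℂ)) + 2 * ((fun i => (n i : ℂ)) ⬝ᵥ p.2))
  map_add' p q := by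
    simp only [Prod.fst_add, Prod.snd_add, add_mulVec, dotProduct_add]
    ring
  map_smul' c p := by
    simp only [Prod.smul_fst, Prod.smul_snd, smul_mulVec, dotProduct_smul, smul_eq_mul,
      RingHom.id_apply]
    ring

lemma norm_thetaExponent_apply_le {g : ℕ} (n : Fin g → ℤ)
    (p : Matrix (Fin g) (Fin g) ℂ × (Fin g → ℂ)) :
    ‖thetaExponent g n p‖ ≤ Real.pi * (1 + ∑ i, |(n i : ℝ)|) ^ 2 * ‖p‖ := by
  set w := ∑ i, |(n i : ℝ)|
  have hw : ∑ i, ‖(n i : ℂ)‖ = w := by simp [w]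
  have hquad := norm_dotProduct_mulVec_le p.1 (fun i => (n i : ℂ))
  have hlin := norm_dotProduct_le_sum_mul (fun i => (n i : ℂ)) p.2
  rw [hw] at hquad hlin
  have hw₀ : 0 ≤ w := by positivity
  calc ‖thetaExponent g n p‖ = Real.pi * ‖(fun i => (n i : ℂ)) ⬝ᵥ p.1 *ᵥ (fun i => (n i : ℂ)) +
        2 * ((fun i => (n i : ℂ)) ⬝ᵥ p.2)‖ := by
        simp [thetaExponent, Real.pi_pos.le]
    _ ≤ Real.pi * (‖p.1‖ * w ^ 2 + 2 * (w * ‖p.2‖)) := by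
        gcongr
        refine (norm_add_le _ _).trans (add_le_add hquad ?_)
        simpa using hlin
    _ ≤ Real.pi * ((1 + w) ^ 2 * ‖p‖) := by
        gcongr
        have h₁ := mul_le_mul_of_nonneg_right (norm_fst_le p) (sq_nonneg w)
        have h₂ := mul_le_mul_of_nonneg_left (norm_snd_le p) hw₀
        nlinarith [norm_nonneg p]
    _ = Real.pi * (1 + w) ^ 2 * ‖p‖ := by ring

lemma re_thetaExponent {g : ℕ} (n : Fin g → ℤ) (p : Matrix (Fin g) (Fin g) ℂ × (Fin g → ℂ)) :
    (thetaExponent g n p).re = -Real.pi *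
      ((fun i => (n i : ℝ)) ⬝ᵥ imSymm p.1 *ᵥ (fun i => (n i : ℝ)) / 2 +
        2 * ∑ i, (n i : ℝ) * (p.2 i).im) := by
  have hquad : ((fun i => (n i : ℂ)) ⬝ᵥ p.1 *ᵥ (fun i => (n i : ℂ))).im =
      (fun i => (n i : ℝ)) ⬝ᵥ imSymm p.1 *ᵥ (fun i => (n i : ℝ)) / 2 := by
    rw [imSymm, dotProduct_add_transpose_mulVec, ← im_dotProduct_mulVec_ofReal]
    push_cast
    ring
  have hlin : ((fun i => (n i : ℂ)) ⬝ᵥ p.2).im = ∑ i, (n i : ℝ) * (p.2 i).im := by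
    simp [dotProduct, Complex.im_sum]
  simp only [thetaExponent, LinearMap.coe_mk, AddHom.coe_mk, Complex.mul_re, Complex.mul_im,
    Complex.ofReal_re, Complex.ofReal_im, Complex.I_re, Complex.I_im, Complex.add_re,
    Complex.add_im, Complex.re_ofNat, Complex.im_ofNat, hquad, hlin]
  ring

lemma re_thetaExponent_le {g : ℕ} {p : Matrix (Fin g) (Fin g) ℂ × (Fin g → ℂ)} {c M : ℝ}
    (hc : ∀ x, c * (x ⬝ᵥ x) ≤ x ⬝ᵥ imSymm p.1 *ᵥ x) (hM : ‖p.2‖ ≤ M) (n : Fin g → ℤ) :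
    (thetaExponent g n p).re ≤
      ∑ i, (-(Real.pi * c / 2) * (n i : ℝ) ^ 2 + 2 * Real.pi * M * |(n i : ℝ)|) := by
  have hquad := hc fun i => (n i : ℝ)
  have hsq : (fun i => (n i : ℝ)) ⬝ᵥ (fun i => (n i : ℝ)) = ∑ i, (n i : ℝ) ^ 2 := by
    simp [dotProduct, sq]
  have hlin : -(M * ∑ i, |(n i : ℝ)|) ≤ ∑ i, (n i : ℝ) * (p.2 i).im := by
    rw [Finset.mul_sum, ← Finset.sum_neg_distrib]
    refine Finset.sum_le_sum fun i _ => neg_le_of_abs_le ?_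
    rw [abs_mul, mul_comm M]
    gcongr
    exact (Complex.abs_im_le_norm _).trans ((norm_le_pi_norm p.2 i).trans hM)
  rw [hsq] at hquad
  rw [re_thetaExponent, Finset.sum_add_distrib, ← Finset.mul_sum, ← Finset.mul_sum]
  nlinarith [Real.pi_pos]

lemma eventually_re_thetaExponent_le {g : ℕ} {p₀ : Matrix (Fin g) (Fin g) ℂ × (Fin g → ℂ)}
    (hp₀ : p₀ ∈ thetaDomain g) :
    ∃ a > 0, ∃ b, ∀ᶠ p in 𝓝 p₀, ∀ n : Fin g → ℤ,
      (thetaExponent g n p).re ≤ ∑ i, (-a * (n i : ℝ) ^ 2 + b * |(n i : ℝ)|) := by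
  obtain ⟨c, hc, hS⟩ := (mem_thetaDomain.1 hp₀).eventually_mul_dotProduct_self_le
  have hcoer : ∀ᶠ p in 𝓝 p₀, ∀ x, c * (x ⬝ᵥ x) ≤ x ⬝ᵥ imSymm p.1 *ᵥ x :=
    (continuous_imSymm.comp continuous_fst).continuousAt hS
  have hbdd : ∀ᶠ p in 𝓝 p₀, ‖p.2‖ < ‖p₀.2‖ + 1 :=
    continuous_snd.norm.continuousAt.eventually_lt continuousAt_const (lt_add_one _)
  refine ⟨Real.pi * c / 2, by positivity, 2 * Real.pi * (‖p₀.2‖ + 1), ?_⟩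
  filter_upwards [hcoer, hbdd] with p hp hp' n
  exact re_thetaExponent_le hp hp'.le n

lemma differentiableAt_thetaFun {g : ℕ} {p₀ : Matrix (Fin g) (Fin g) ℂ × (Fin g → ℂ)}
    (hp₀ : p₀ ∈ thetaDomain g) : DifferentiableAt ℂ (thetaFun g) p₀ := by
  obtain ⟨a, ha, b, hre⟩ := eventually_re_thetaExponent_le hp₀
  set L := fun n => (thetaExponent g n).mkContinuous _ (norm_thetaExponent_apply_le n)
  set w := fun n : Fin g → ℤ => ∑ i, |(n i : ℝ)|
  set E := fun n : Fin g → ℤ => Real.exp (∑ i, (-a * (n i : ℝ) ^ 2 + (b + 2) * |(n i : ℝ)|))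
  have hL n : ‖L n‖ ≤ Real.pi * (1 + w n) ^ 2 :=
    LinearMap.mkContinuous_norm_le _ (by positivity) _
  -- the factor `(1 + w n) ^ 2` coming from the derivative is absorbed by raising `b` to `b + 2`
  have hE n p (hp : (L n p).re ≤ ∑ i, (-a * (n i : ℝ) ^ 2 + b * |(n i : ℝ)|)) :
      Real.exp (L n p).re * (1 + w n) ^ 2 ≤ E n := by
    refine (exp_mul_one_add_sq_le (by positivity)).trans (Real.exp_le_exp.2 ?_)
    have hsplit : ∑ i, (-a * (n i : ℝ) ^ 2 + (b + 2) * |(n i : ℝ)|) =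
        ∑ i, (-a * (n i : ℝ) ^ 2 + b * |(n i : ℝ)|) + 2 * w n := by
      rw [Finset.mul_sum, ← Finset.sum_add_distrib]
      exact Finset.sum_congr rfl fun i _ => by ring
    linarith
  refine differentiableAt_tsum_of_eventually_norm_le (f := fun n p => Complex.exp (L n p))
    (f' := fun n p => Complex.exp (L n p) • L n) (u := fun n => Real.pi * E n)
    ((summable_exp_sum_neg_mul_sq_add_mul_abs ha (b + 2) g).mul_left Real.pi)
    (fun n p => (Complex.hasDerivAt_exp _).comp_hasFDerivAt p (L n).hasFDerivAt)
    (hre.mono fun p hp n => ⟨?_, ?_⟩)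
  · calc ‖Complex.exp (L n p)‖ = Real.exp (L n p).re * 1 := by rw [Complex.norm_exp, mul_one]
      _ ≤ Real.exp (L n p).re * (1 + w n) ^ 2 := by
          gcongr
          exact one_le_pow₀ (le_add_of_nonneg_right (by positivity))
      _ ≤ E n := hE n p (hp n)
      _ ≤ Real.pi * E n :=
          le_mul_of_one_le_left (Real.exp_pos _).le (by linarith [Real.pi_gt_three])
  · calc ‖Complex.exp (L n p) • L n‖ = Real.exp (L n p).re * ‖L n‖ := by
          rw [norm_smul, Complex.norm_exp]
      _ ≤ Real.exp (L n p).re * (Real.pi * (1 + w n) ^ 2) := by gcongr; exact hL n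
      _ = Real.pi * (Real.exp (L n p).re * (1 + w n) ^ 2) := by ring
      _ ≤ Real.pi * E n := by gcongr; exact hE n p (hp n)

lemma mk_mem_thetaDomain {g : ℕ} {τ : Matrix (Fin g) (Fin g) ℂ} (hτ : τ.IsSymm)
    (hpos : (τ.map Complex.im).PosDef) (z : Fin g → ℂ) : (τ, z) ∈ thetaDomain g := by
  rw [mem_thetaDomain, imSymm, ← transpose_map, hτ.eq]
  exact hpos.add hpos

/-- `Ω` is open, the theta series defines a holomorphic function on `Ω`, and `Ω`
contains `H_g × ℂ^g`; hence the Riemann theta function is holomorphic on `H_g × ℂ^g`. -/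
theorem theta_holomorphic (g : ℕ) :
    IsOpen (thetaDomain g) ∧
      DifferentiableOn ℂ (thetaFun g) (thetaDomain g) ∧
      (∀ (τ : Matrix (Fin g) (Fin g) ℂ) (z : Fin g → ℂ), τ.IsSymm →
        (Matrix.of fun i j => (τ i j).im).PosDef → (τ, z) ∈ thetaDomain g) :=
  ⟨isOpen_setOf_posDef_imSymm.preimage continuous_fst,
    fun _ hp => (differentiableAt_thetaFun hp).differentiableWithinAt,
    fun _ z hτ hpos => mk_mem_thetaDomain hτ hpos z⟩
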